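/- Let T = (T_1, ..., T_d) be a d-tuple of n×n complex matrices and λ ∈ [0,1]. Then ‖M_λ(T)‖_{s,2} ≤ (λ + (1-λ)√(min{n,d})) ‖T‖_{s,2}, where M_λ(T) = λT + (1-λ)T^D is the spherical λ-mean transform. -/

import Mathlib

open scoped Matrix ComplexOrder

/-- Real power of a matrix via the continuous functional calculus (for Hermitian matrices). -/
noncomputable def mpow {m : Type*} [Fintype m] [DecidableEq m]
    (A : Matrix m m ℂ) (t : ℝ) : Matrix m m ℂ :=
  cfc (fun x : ℝ => x ^ t) A

/-- The operator (spectral) norm of a matrix. -/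
noncomputable def opNorm {m : Type*} [Fintype m] [DecidableEq m] (A : Matrix m m ℂ) : ℝ :=
  ‖Matrix.toEuclideanCLM (𝕜 := ℂ) A‖

/-- The Schatten `p`-norm of a matrix: `(tr |A|^p)^{1/p}`. -/
noncomputable def schattenNorm {m : Type*} [Fintype m] [DecidableEq m]
    (p : ℝ) (A : Matrix m m ℂ) : ℝ :=
  ((mpow (Aᴴ * A) (p / 2)).trace.re) ^ (1 / p)

/-- The spherical Schatten `p`-norm of a tuple: `(tr (∑ S_i* S_i)^{p/2})^{1/p}`. -/
noncomputable def sphSchattenNorm {m : Type*} [Fintype m] [DecidableEq m] {d : ℕ}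
    (p : ℝ) (T : Fin d → Matrix m m ℂ) : ℝ :=
  ((mpow (∑ i, (T i)ᴴ * T i) (p / 2)).trace.re) ^ (1 / p)

/-!
Stacking the entries of a tuple into one Euclidean vector turns `‖·‖_{s,2}` into a Euclidean
norm, so the triangle inequality gives `‖M_λ(T)‖ ≤ λ‖T‖ + (1-λ)‖T^D‖`. With `Q = ∑ Vᵢ Vᵢ*` one
has `‖T^D‖² = tr (P² Q)` and `‖T‖² = tr P²`, so it suffices that `Q ≤ min(n,d) • 1`. Each `Vᵢ`
is a contraction, so `Vᵢ Vᵢ* ≤ 1` and `Q ≤ d • 1`; and a positive matrix lies below its trace,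
while `tr Q = tr ∑ Vᵢ* Vᵢ ≤ n`.
-/

namespace CStarAlgebra

variable {A : Type*} [CStarAlgebra A] [PartialOrder A] [StarOrderedRing A]

-- By the C⋆-identity, both inequalities say `‖a‖ ≤ 1`.
lemma mul_star_le_one_of_star_mul_le_one {a : A} (h : star a * a ≤ 1) : a * star a ≤ 1 := by
  rw [← norm_le_one_iff_of_nonneg _ (star_mul_self_nonneg a), CStarRing.norm_star_mul_self] at h
  rwa [← norm_le_one_iff_of_nonneg _ (mul_star_self_nonneg a), CStarRing.norm_self_mul_star]

end CStarAlgebra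

namespace Matrix

open scoped MatrixOrder

variable {m ι : Type*} [Fintype m] [Fintype ι]

lemma trace_sum_mul_left_conjTranspose_mul_self {R : Type*} [CommSemiring R] [StarRing R]
    (P : Matrix m m R) (V : ι → Matrix m m R) :
    (∑ i, (P * V i)ᴴ * (P * V i)).trace = (Pᴴ * P * ∑ i, V i * (V i)ᴴ).trace := by
  simp only [trace_sum, Matrix.mul_sum, conjTranspose_mul]
  refine Finset.sum_congr rfl fun i _ => ?_
  rw [Matrix.mul_assoc, Matrix.mul_assoc, trace_mul_comm, Matrix.mul_assoc, Matrix.mul_assoc]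

variable [DecidableEq m]

lemma PosSemidef.trace_mul_nonneg {A B : Matrix m m ℂ} (hA : A.PosSemidef) (hB : B.PosSemidef) :
    0 ≤ (A * B).trace := by
  set S := CFC.sqrt B
  have hS : Sᴴ = S := (IsSelfAdjoint.of_nonneg (CFC.sqrt_nonneg B)).star_eq
  have hSS : S * S = B := CFC.sqrt_mul_sqrt_self B hB.nonneg
  have := (hA.conjTranspose_mul_mul_same S).trace_nonneg
  rwa [hS, ← trace_mul_cycle, Matrix.mul_assoc, hSS] at this

lemma PosSemidef.re_trace_mul_le {A B : Matrix m m ℂ} (hA : A.PosSemidef) {c : ℝ}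
    (hB : B ≤ algebraMap ℝ _ c) : (A * B).trace.re ≤ c * A.trace.re := by
  have := (Complex.le_def.mp (hA.trace_mul_nonneg (le_iff.mp hB))).1
  rw [Matrix.mul_sub, trace_sub, Algebra.algebraMap_eq_smul_one, Matrix.mul_smul, Matrix.mul_one,
    trace_smul] at this
  simp only [Complex.zero_re, Complex.sub_re, Complex.real_smul, Complex.re_ofReal_mul] at this
  linarith

lemma PosSemidef.le_algebraMap_of_re_trace_le {Q : Matrix m m ℂ} (hQ : Q.PosSemidef) {c : ℝ}
    (hc : Q.trace.re ≤ c) : Q ≤ algebraMap ℝ _ c := by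
  refine le_algebraMap_of_spectrum_le (fun x hx => ?_) hQ.isHermitian
  rw [hQ.isHermitian.spectrum_real_eq_range_eigenvalues] at hx
  obtain ⟨i, rfl⟩ := hx
  have htr : Q.trace.re = ∑ j, hQ.isHermitian.eigenvalues j := by
    simp [hQ.isHermitian.trace_eq_sum_eigenvalues]
  rw [htr] at hc
  exact (Finset.single_le_sum (fun j _ => hQ.eigenvalues_nonneg j) (Finset.mem_univ i)).trans hc

lemma mul_conjTranspose_le_one_of_conjTranspose_mul_le_one {W : Matrix m m ℂ}
    (h : Wᴴ * W ≤ 1) : W * Wᴴ ≤ 1 := by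
  open scoped Matrix.Norms.L2Operator in
  exact CStarAlgebra.mul_star_le_one_of_star_mul_le_one h

lemma sum_mul_conjTranspose_le_card_index {V : ι → Matrix m m ℂ}
    (hV : ∑ i, (V i)ᴴ * V i ≤ 1) : ∑ i, V i * (V i)ᴴ ≤ algebraMap ℝ _ (Fintype.card ι) := by
  have hVi (i : ι) : (V i)ᴴ * V i ≤ 1 :=
    (Finset.single_le_sum (fun j _ => (posSemidef_conjTranspose_mul_self (V j)).nonneg)
      (Finset.mem_univ i)).trans hV
  calc ∑ i, V i * (V i)ᴴ ≤ ∑ _i : ι, (1 : Matrix m m ℂ) :=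
        Finset.sum_le_sum fun i _ => mul_conjTranspose_le_one_of_conjTranspose_mul_le_one (hVi i)
    _ = algebraMap ℝ _ (Fintype.card ι) := by
        rw [Finset.sum_const, Finset.card_univ, Algebra.algebraMap_eq_smul_one,
          Nat.cast_smul_eq_nsmul]

lemma sum_mul_conjTranspose_le_card_dim {V : ι → Matrix m m ℂ}
    (hV : ∑ i, (V i)ᴴ * V i ≤ 1) : ∑ i, V i * (V i)ᴴ ≤ algebraMap ℝ _ (Fintype.card m) := by
  refine (posSemidef_sum _ fun i _ =>
    posSemidef_self_mul_conjTranspose (V i)).le_algebraMap_of_re_trace_le ?_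
  have htr := (le_iff.mp hV).trace_nonneg
  rw [trace_sub, trace_one, sub_nonneg, trace_sum] at htr
  rw [trace_sum]
  simp_rw [trace_mul_comm (V _)]
  simpa using (Complex.le_def.mp htr).1

end Matrix

section TupleEuclidean

variable {ι m n : Type*} [Fintype ι] [Fintype m] [Fintype n]

def tupleEuclidean (S : ι → Matrix m n ℂ) : EuclideanSpace ℂ (ι × m × n) :=
  WithLp.toLp 2 fun p => S p.1 p.2.1 p.2.2

lemma norm_tupleEuclidean_sq (S : ι → Matrix m n ℂ) :
    ‖tupleEuclidean S‖ ^ 2 = (∑ i, (S i)ᴴ * S i).trace.re := by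
  rw [EuclideanSpace.norm_sq_eq, Matrix.trace_sum, Complex.re_sum]
  simp only [tupleEuclidean, PiLp.toLp_apply, Fintype.sum_prod_type, Matrix.trace, Matrix.diag,
    Matrix.mul_apply, Matrix.conjTranspose_apply, RCLike.star_def, Complex.conj_mul',
    Complex.re_sum, ← Complex.ofReal_pow, Complex.ofReal_re]
  exact Finset.sum_congr rfl fun i _ => Finset.sum_comm

end TupleEuclidean

section SphSchattenTwo

variable {m : Type*} [Fintype m] [DecidableEq m] {d : ℕ}

lemma sphSchattenNorm_two_eq_norm_tupleEuclidean (S : Fin d → Matrix m m ℂ) :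
    sphSchattenNorm 2 S = ‖tupleEuclidean S‖ := by
  have hS : IsSelfAdjoint (∑ i, (S i)ᴴ * S i) :=
    (Matrix.posSemidef_sum _ fun i _ => Matrix.posSemidef_conjTranspose_mul_self (S i)).isHermitian
  rw [sphSchattenNorm, mpow, div_self two_ne_zero]
  simp_rw [Real.rpow_one]
  rw [cfc_id' ℝ _ hS, ← norm_tupleEuclidean_sq, ← Real.sqrt_eq_rpow, Real.sqrt_sq (norm_nonneg _)]

lemma sphSchattenNorm_two_nonneg (S : Fin d → Matrix m m ℂ) : 0 ≤ sphSchattenNorm 2 S :=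
  sphSchattenNorm_two_eq_norm_tupleEuclidean S ▸ norm_nonneg _

lemma sphSchattenNorm_two_sq (S : Fin d → Matrix m m ℂ) :
    sphSchattenNorm 2 S ^ 2 = (∑ i, (S i)ᴴ * S i).trace.re := by
  rw [sphSchattenNorm_two_eq_norm_tupleEuclidean, norm_tupleEuclidean_sq]

lemma sphSchattenNorm_two_add_le (S R : Fin d → Matrix m m ℂ) :
    sphSchattenNorm 2 (S + R) ≤ sphSchattenNorm 2 S + sphSchattenNorm 2 R := by
  simp only [sphSchattenNorm_two_eq_norm_tupleEuclidean]
  exact norm_add_le (tupleEuclidean S) (tupleEuclidean R)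

lemma sphSchattenNorm_two_smul (c : ℂ) (S : Fin d → Matrix m m ℂ) :
    sphSchattenNorm 2 (c • S) = ‖c‖ * sphSchattenNorm 2 S := by
  simp only [sphSchattenNorm_two_eq_norm_tupleEuclidean]
  exact norm_smul c (tupleEuclidean S)

open scoped MatrixOrder in
theorem sphSchattenNorm_two_mul_left_le {P : Matrix m m ℂ} {T V : Fin d → Matrix m m ℂ}
    (hPT : Pᴴ * P = ∑ i, (T i)ᴴ * T i) (hV : ∑ i, (V i)ᴴ * V i ≤ 1) :
    sphSchattenNorm 2 (fun i => P * V i)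
      ≤ √(min (Fintype.card m : ℝ) d) * sphSchattenNorm 2 T := by
  set c := min (Fintype.card m : ℝ) d
  have hQ : ∑ i, V i * (V i)ᴴ ≤ algebraMap ℝ _ c := by
    rcases le_total (Fintype.card m : ℝ) d with h | h
    · simpa [c, min_eq_left h] using Matrix.sum_mul_conjTranspose_le_card_dim hV
    · simpa [c, min_eq_right h] using Matrix.sum_mul_conjTranspose_le_card_index hV
  have hsq : sphSchattenNorm 2 (fun i => P * V i) ^ 2 ≤ c * sphSchattenNorm 2 T ^ 2 := by
    rw [sphSchattenNorm_two_sq, sphSchattenNorm_two_sq,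
      Matrix.trace_sum_mul_left_conjTranspose_mul_self, ← hPT]
    exact (Matrix.posSemidef_conjTranspose_mul_self P).re_trace_mul_le hQ
  calc sphSchattenNorm 2 (fun i => P * V i)
      = √(sphSchattenNorm 2 (fun i => P * V i) ^ 2) :=
        (Real.sqrt_sq (sphSchattenNorm_two_nonneg _)).symm
    _ ≤ √(c * sphSchattenNorm 2 T ^ 2) := Real.sqrt_le_sqrt hsq
    _ = √c * sphSchattenNorm 2 T := by
        rw [Real.sqrt_mul (by positivity), Real.sqrt_sq (sphSchattenNorm_two_nonneg T)]

end SphSchattenTwo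

theorem sphSchattenNorm_two_lambda_mean_le_min_general {n d : ℕ}
    (l : ℝ) (hl : l ∈ Set.Icc (0 : ℝ) 1)
    (T V : Fin d → Matrix (Fin n) (Fin n) ℂ) (P : Matrix (Fin n) (Fin n) ℂ)
    (hP : P.PosSemidef) (hP2 : P * P = ∑ i, (T i)ᴴ * T i)
    (hV : ((1 : Matrix (Fin n) (Fin n) ℂ) - ∑ i, (V i)ᴴ * V i).PosSemidef) :
    sphSchattenNorm 2 (fun i => (l : ℂ) • T i + ((1 - l : ℝ) : ℂ) • (P * V i)) ≤
      (l + (1 - l) * Real.sqrt (min (n : ℝ) (d : ℝ))) * sphSchattenNorm 2 T := by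
  obtain ⟨hl0, hl1⟩ := hl
  have hD : sphSchattenNorm 2 (fun i => P * V i) ≤ √(min (n : ℝ) d) * sphSchattenNorm 2 T := by
    simpa using sphSchattenNorm_two_mul_left_le (by rwa [hP.isHermitian.eq]) hV
  calc sphSchattenNorm 2 (fun i => (l : ℂ) • T i + ((1 - l : ℝ) : ℂ) • (P * V i))
      ≤ sphSchattenNorm 2 ((l : ℂ) • T)
          + sphSchattenNorm 2 (((1 - l : ℝ) : ℂ) • fun i => P * V i) :=
        sphSchattenNorm_two_add_le _ _
    _ = l * sphSchattenNorm 2 T + (1 - l) * sphSchattenNorm 2 (fun i => P * V i) := by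
        rw [sphSchattenNorm_two_smul, sphSchattenNorm_two_smul, Complex.norm_real,
          Complex.norm_real, Real.norm_of_nonneg hl0, Real.norm_of_nonneg (sub_nonneg.mpr hl1)]
    _ ≤ (l + (1 - l) * √(min (n : ℝ) d)) * sphSchattenNorm 2 T := by
        linarith [mul_le_mul_of_nonneg_left hD (sub_nonneg.mpr hl1)]

/-- `‖M_λ(T)‖_{s,2} ≤ (λ + (1-λ)√(min{n,d})) ‖T‖_{s,2}` for a tuple of `n × n` matrices. -/
theorem sphSchattenNorm_two_lambda_mean_le_min {n d : ℕ}
    (l : ℝ) (hl : l ∈ Set.Icc (0 : ℝ) 1)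
    (T V : Fin d → Matrix (Fin n) (Fin n) ℂ) (P : Matrix (Fin n) (Fin n) ℂ)
    (hP : P.PosSemidef) (hP2 : P * P = ∑ i, (T i)ᴴ * T i)
    (hT : ∀ i, T i = V i * P)
    (hV : ((1 : Matrix (Fin n) (Fin n) ℂ) - ∑ i, (V i)ᴴ * V i).PosSemidef) :
    sphSchattenNorm 2 (fun i => (l : ℂ) • T i + ((1 - l : ℝ) : ℂ) • (P * V i)) ≤
      (l + (1 - l) * Real.sqrt (min (n : ℝ) (d : ℝ))) * sphSchattenNorm 2 T :=
  sphSchattenNorm_two_lambda_mean_le_min_general l hl T V P hP hP2 hV
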